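/- Let G be a graph, f : V(G) → ℕ, and H an induced subgraph of G. If G − H is f|_{V(G−H)}-AT and H is f_H-AT, where f_H(v) = f(v) + d_H(v) − d_G(v) for v ∈ V(H), then G is f-AT. -/
import Mathlib


namespace Paper

variable {V : Type*} {E : Type*} {W : Type*}

/-- The degree of a vertex. -/
noncomputable def deg (G : SimpleGraph V) (v : V) : ℕ := (G.neighborSet v).ncard

/-- The number of edges of a graph. -/
noncomputable def edgeCount (G : SimpleGraph V) : ℕ := G.edgeSet.ncard

/-- The minimum degree δ(G). -/
noncomputable def minDeg (G : SimpleGraph V) : ℕ := sInf (Set.range (deg G))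

/-- The clique number ω(G). -/
noncomputable def cliqueNum (G : SimpleGraph V) : ℕ :=
  sSup {n | ∃ s : Finset V, G.IsNClique n s}

/-- `G` is (a copy of) the complete graph `K_k`. -/
def IsCompleteK (k : ℕ) (G : SimpleGraph V) : Prop :=
  Nat.card V = k ∧ ∀ u v : V, u ≠ v → G.Adj u v

/-- `D` is an orientation of the simple graph `G`: every edge gets exactly one direction. -/
def IsOrientation (G : SimpleGraph V) (D : V → V → Prop) : Prop :=
  (∀ u v, D u v → G.Adj u v) ∧ ∀ u v, G.Adj u v → (D u v ↔ ¬ D v u)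

/-- Out-degree of `v` in the digraph `D`. -/
noncomputable def outDeg (D : V → V → Prop) (v : V) : ℕ := {u | D v u}.ncard

/-- `A` is a spanning Eulerian subdigraph of `D`: a set of directed edges of `D` in which
every vertex has equal in-degree and out-degree. -/
def IsEulerianSub (D : V → V → Prop) (A : Set (V × V)) : Prop :=
  (∀ p ∈ A, D p.1 p.2) ∧
    ∀ v : V, {p | p ∈ A ∧ p.2 = v}.ncard = {p | p ∈ A ∧ p.1 = v}.ncard

/-- `EE D`: the number of even spanning Eulerian subgraphs of `D`. -/
noncomputable def EE (D : V → V → Prop) : ℕ :=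
  {A : Set (V × V) | IsEulerianSub D A ∧ Even A.ncard}.ncard

/-- `EO D`: the number of odd spanning Eulerian subgraphs of `D`. -/
noncomputable def EO (D : V → V → Prop) : ℕ :=
  {A : Set (V × V) | IsEulerianSub D A ∧ ¬ Even A.ncard}.ncard

/-- `G` is `f`-Alon–Tarsi: it has an orientation `D` with `f v ≥ d⁺(v) + 1` for every `v`
and `EE D ≠ EO D`. -/
def IsfAT (G : SimpleGraph V) (f : V → ℕ) : Prop :=
  ∃ D : V → V → Prop, IsOrientation G D ∧ (∀ v, outDeg D v + 1 ≤ f v) ∧ EE D ≠ EO D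

/-- `G` is AT-reducible to the nonempty induced subgraph on `S`, which is `f_H`-AT for
`f_H v = δ(G) + d_H v - d_G v`. -/
def ATReducibleTo (G : SimpleGraph V) (S : Set V) : Prop :=
  S.Nonempty ∧ IsfAT (G.induce S) (fun v => minDeg G + deg (G.induce S) v - deg G ↑v)

/-- `G` is AT-irreducible: it is AT-reducible to no nonempty induced subgraph. -/
def ATIrreducible (G : SimpleGraph V) : Prop := ∀ S : Set V, ¬ ATReducibleTo G S

/-- Gallai's function `g_k(n, c)`. -/
noncomputable def gfun (k n : ℕ) (c : ℝ) : ℝ :=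
  ((k : ℝ) - 1 + ((k : ℝ) - 3) / (((k : ℝ) - c) * ((k : ℝ) - 1) + (k : ℝ) - 3)) * n

/-- The constant `α_k = 1/2 - 1/((k-1)(k-2))`. -/
noncomputable def alphaK (k : ℕ) : ℝ := 1 / 2 - 1 / (((k : ℝ) - 1) * ((k : ℝ) - 2))

section Aux2
variable {V : Type*} {S : Set V}

def glue (G : SimpleGraph V) (S : Set V) (D1 : ↥Sᶜ → ↥Sᶜ → Prop) (D2 : ↥S → ↥S → Prop) :
    V → V → Prop := fun u v =>
  (∃ (hu : u ∈ S) (hv : v ∈ S), D2 ⟨u, hu⟩ ⟨v, hv⟩) ∨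
  (∃ (hu : u ∉ S) (hv : v ∉ S), D1 ⟨u, hu⟩ ⟨v, hv⟩) ∨
  (u ∈ S ∧ v ∉ S ∧ G.Adj u v)

def plift' (S : Set V) (B : Set (↥S × ↥S)) : Set (V × V) :=
  Prod.map Subtype.val Subtype.val '' B

lemma pmap_inj : Function.Injective
    (Prod.map (Subtype.val : ↥S → V) (Subtype.val : ↥S → V)) :=
  Subtype.val_injective.prodMap Subtype.val_injective

lemma mem_plift' {B : Set (↥S × ↥S)} {p : V × V} :
    p ∈ plift' S B ↔ ∃ (h1 : p.1 ∈ S) (h2 : p.2 ∈ S), (⟨p.1, h1⟩, ⟨p.2, h2⟩) ∈ B := by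
  constructor
  · rintro ⟨⟨⟨a, ha⟩, ⟨b, hb⟩⟩, hq, rfl⟩
    exact ⟨ha, hb, hq⟩
  · rintro ⟨h1, h2, hq⟩
    exact ⟨(⟨p.1, h1⟩, ⟨p.2, h2⟩), hq, rfl⟩

lemma plift'_mem_iff {B : Set (↥S × ↥S)} (q : ↥S × ↥S) :
    (↑q.1, ↑q.2) ∈ plift' S B ↔ q ∈ B := by
  constructor
  · rintro ⟨q', hq', he⟩
    obtain rfl : q' = q := pmap_inj he
    exact hq'
  · intro hq; exact ⟨q, hq, rfl⟩

lemma ncard_plift' (B : Set (↥S × ↥S)) : (plift' S B).ncard = B.ncard :=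
  Set.ncard_image_of_injective _ pmap_inj

lemma plift'_fiber_snd {B : Set (↥S × ↥S)} {v : V} (hv : v ∈ S) :
    {p | p ∈ plift' S B ∧ p.2 = v} =
      Prod.map Subtype.val Subtype.val '' {q | q ∈ B ∧ q.2 = ⟨v, hv⟩} := by
  ext p
  constructor
  · rintro ⟨⟨⟨⟨a, ha⟩, ⟨b, hb⟩⟩, hq, rfl⟩, h2⟩
    exact ⟨(⟨a, ha⟩, ⟨b, hb⟩), ⟨hq, Subtype.ext h2⟩, rfl⟩
  · rintro ⟨⟨x, y⟩, ⟨hq, h2⟩, rfl⟩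
    exact ⟨⟨(x, y), hq, rfl⟩, congrArg Subtype.val h2⟩

lemma plift'_fiber_fst {B : Set (↥S × ↥S)} {v : V} (hv : v ∈ S) :
    {p | p ∈ plift' S B ∧ p.1 = v} =
      Prod.map Subtype.val Subtype.val '' {q | q ∈ B ∧ q.1 = ⟨v, hv⟩} := by
  ext p
  constructor
  · rintro ⟨⟨⟨⟨a, ha⟩, ⟨b, hb⟩⟩, hq, rfl⟩, h2⟩
    exact ⟨(⟨a, ha⟩, ⟨b, hb⟩), ⟨hq, Subtype.ext h2⟩, rfl⟩
  · rintro ⟨⟨x, y⟩, ⟨hq, h2⟩, rfl⟩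
    exact ⟨⟨(x, y), hq, rfl⟩, congrArg Subtype.val h2⟩

lemma ncard_plift'_fiber_snd {B : Set (↥S × ↥S)} {v : V} (hv : v ∈ S) :
    {p | p ∈ plift' S B ∧ p.2 = v}.ncard = {q | q ∈ B ∧ q.2 = ⟨v, hv⟩}.ncard := by
  rw [plift'_fiber_snd hv, Set.ncard_image_of_injective _ pmap_inj]

lemma ncard_plift'_fiber_fst {B : Set (↥S × ↥S)} {v : V} (hv : v ∈ S) :
    {p | p ∈ plift' S B ∧ p.1 = v}.ncard = {q | q ∈ B ∧ q.1 = ⟨v, hv⟩}.ncard := by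
  rw [plift'_fiber_fst hv, Set.ncard_image_of_injective _ pmap_inj]

lemma plift'_fiber_snd_empty {B : Set (↥S × ↥S)} {v : V} (hv : v ∉ S) :
    {p | p ∈ plift' S B ∧ p.2 = v} = ∅ := by
  rw [Set.eq_empty_iff_forall_notMem]
  rintro p ⟨hp, h2⟩
  obtain ⟨_, hb, _⟩ := mem_plift'.1 hp
  exact hv (h2 ▸ hb)

lemma plift'_fiber_fst_empty {B : Set (↥S × ↥S)} {v : V} (hv : v ∉ S) :
    {p | p ∈ plift' S B ∧ p.1 = v} = ∅ := by
  rw [Set.eq_empty_iff_forall_notMem]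
  rintro p ⟨hp, h2⟩
  obtain ⟨ha, _, _⟩ := mem_plift'.1 hp
  exact hv (h2 ▸ ha)

variable {G : SimpleGraph V} {D1 : ↥Sᶜ → ↥Sᶜ → Prop} {D2 : ↥S → ↥S → Prop}

lemma glue_mem_S_right {u v : V} (h : glue G S D1 D2 u v) (hv : v ∈ S) :
    ∃ hu : u ∈ S, D2 ⟨u, hu⟩ ⟨v, hv⟩ := by
  rcases h with ⟨hu, hv', hd⟩ | ⟨hu, hv', hd⟩ | ⟨hu, hv', hd⟩
  · exact ⟨hu, hd⟩
  · exact absurd hv hv'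
  · exact absurd hv hv'

lemma glue_mem_compl_left {u v : V} (h : glue G S D1 D2 u v) (hu : u ∉ S) :
    ∃ hv : v ∉ S, D1 ⟨u, hu⟩ ⟨v, hv⟩ := by
  rcases h with ⟨hu', hv', hd⟩ | ⟨hu', hv', hd⟩ | ⟨hu', hv', hd⟩
  · exact absurd hu' hu
  · exact ⟨hv', hd⟩
  · exact absurd hu' hu

lemma fiber_union_snd (X Y : Set (V × V)) (v : V) :
    {p | p ∈ X ∪ Y ∧ p.2 = v} = {p | p ∈ X ∧ p.2 = v} ∪ {p | p ∈ Y ∧ p.2 = v} := by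
  ext p; simp only [Set.mem_setOf_eq, Set.mem_union]; tauto

lemma fiber_union_fst (X Y : Set (V × V)) (v : V) :
    {p | p ∈ X ∪ Y ∧ p.1 = v} = {p | p ∈ X ∧ p.1 = v} ∪ {p | p ∈ Y ∧ p.1 = v} := by
  ext p; simp only [Set.mem_setOf_eq, Set.mem_union]; tauto

lemma euler_glue_union (hB1 : IsEulerianSub D1 B1) (hB2 : IsEulerianSub D2 B2) :
    IsEulerianSub (glue G S D1 D2) (plift' Sᶜ B1 ∪ plift' S B2) := by
  constructor
  · rintro p (hp | hp)
    · obtain ⟨h1, h2, hq⟩ := mem_plift'.1 hp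
      exact Or.inr (Or.inl ⟨h1, h2, hB1.1 _ hq⟩)
    · obtain ⟨h1, h2, hq⟩ := mem_plift'.1 hp
      exact Or.inl ⟨h1, h2, hB2.1 _ hq⟩
  · intro v
    by_cases hv : v ∈ S
    · have hv' : v ∉ Sᶜ := fun h => h hv
      rw [fiber_union_snd, fiber_union_fst, plift'_fiber_snd_empty (B := B1) hv',
        plift'_fiber_fst_empty (B := B1) hv', Set.empty_union, Set.empty_union,
        ncard_plift'_fiber_snd hv, ncard_plift'_fiber_fst hv]
      exact hB2.2 ⟨v, hv⟩
    · have hv' : v ∈ Sᶜ := hv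
      rw [fiber_union_snd, fiber_union_fst, plift'_fiber_snd_empty (B := B2) hv,
        plift'_fiber_fst_empty (B := B2) hv, Set.union_empty, Set.union_empty,
        ncard_plift'_fiber_snd hv', ncard_plift'_fiber_fst hv']
      exact hB1.2 ⟨v, hv'⟩

lemma ncard_union_plift' [Finite V] (B1 : Set (↥Sᶜ × ↥Sᶜ)) (B2 : Set (↥S × ↥S)) :
    (plift' Sᶜ B1 ∪ plift' S B2).ncard = B1.ncard + B2.ncard := by
  rw [Set.ncard_union_eq ?_ (Set.toFinite _) (Set.toFinite _), ncard_plift', ncard_plift']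
  rw [Set.disjoint_left]
  intro p hp1 hp2
  obtain ⟨h1, _, _⟩ := mem_plift'.1 hp1
  obtain ⟨h1', _, _⟩ := mem_plift'.1 hp2
  exact h1 h1'

lemma euler_no_cross [Finite V] {A : Set (V × V)} (hA : IsEulerianSub (glue G S D1 D2) A) :
    ∀ p ∈ A, p.1 ∈ S → p.2 ∈ S := by
  classical
  cases nonempty_fintype V
  have hAf : A.Finite := Set.toFinite A
  set T : Finset (V × V) := hAf.toFinset with hT
  have hmemT : ∀ p, p ∈ T ↔ p ∈ A := fun p => Set.Finite.mem_toFinset hAf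
  have key : ∀ v, (T.filter fun p => p.2 = v).card = (T.filter fun p => p.1 = v).card := by
    intro v
    have h := hA.2 v
    have e2 : {p | p ∈ A ∧ p.2 = v} = ↑(T.filter fun p => p.2 = v) := by
      ext p; simp [hmemT p]
    have e1 : {p | p ∈ A ∧ p.1 = v} = ↑(T.filter fun p => p.1 = v) := by
      ext p; simp [hmemT p]
    rwa [e2, e1, Set.ncard_coe_finset, Set.ncard_coe_finset] at h
  have hSf : S.Finite := Set.toFinite S
  set Sfin : Finset V := hSf.toFinset with hSfin
  have hmemS : ∀ v, v ∈ Sfin ↔ v ∈ S := fun v => Set.Finite.mem_toFinset hSf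
  have hin : (T.filter fun p => p.2 ∈ S).card = ∑ v ∈ Sfin, (T.filter fun p => p.2 = v).card := by
    rw [Finset.card_eq_sum_card_fiberwise (f := Prod.snd) (t := Sfin)
      (fun p hp => (hmemS _).2 (Finset.mem_filter.1 hp).2)]
    refine Finset.sum_congr rfl fun v hv => ?_
    congr 1
    ext p
    simp only [Finset.mem_filter]
    have hv' : v ∈ S := (hmemS v).1 hv
    constructor
    · rintro ⟨⟨h1, h2⟩, h3⟩; exact ⟨h1, h3⟩
    · rintro ⟨h1, h3⟩; exact ⟨⟨h1, h3 ▸ hv'⟩, h3⟩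
  have hout : (T.filter fun p => p.1 ∈ S).card = ∑ v ∈ Sfin, (T.filter fun p => p.1 = v).card := by
    rw [Finset.card_eq_sum_card_fiberwise (f := Prod.fst) (t := Sfin)
      (fun p hp => (hmemS _).2 (Finset.mem_filter.1 hp).2)]
    refine Finset.sum_congr rfl fun v hv => ?_
    congr 1
    ext p
    simp only [Finset.mem_filter]
    have hv' : v ∈ S := (hmemS v).1 hv
    constructor
    · rintro ⟨⟨h1, h2⟩, h3⟩; exact ⟨h1, h3⟩
    · rintro ⟨h1, h3⟩; exact ⟨⟨h1, h3 ▸ hv'⟩, h3⟩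
  have hmain : (T.filter fun p => p.2 ∈ S).card = (T.filter fun p => p.1 ∈ S).card := by
    rw [hin, hout]
    exact Finset.sum_congr rfl fun v _ => key v
  have d1 := Finset.card_filter_add_card_filter_not
    (s := T.filter fun p => p.1 ∈ S) (p := fun p => p.2 ∈ S)
  have d2 := Finset.card_filter_add_card_filter_not
    (s := T.filter fun p => p.2 ∈ S) (p := fun p => p.1 ∈ S)
  have e0 : ((T.filter fun p => p.2 ∈ S).filter fun p => ¬ p.1 ∈ S) = ∅ := by
    rw [Finset.eq_empty_iff_forall_notMem]
    intro p hp
    obtain ⟨hp2, h1⟩ := Finset.mem_filter.1 hp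
    obtain ⟨hpT, h2⟩ := Finset.mem_filter.1 hp2
    obtain ⟨hu, _⟩ := glue_mem_S_right (hA.1 p ((hmemT p).1 hpT)) h2
    exact h1 hu
  have comm : ((T.filter fun p => p.1 ∈ S).filter fun p => p.2 ∈ S)
      = ((T.filter fun p => p.2 ∈ S).filter fun p => p.1 ∈ S) := by
    ext p
    simp only [Finset.mem_filter]
    tauto
  have hc0 : ((T.filter fun p => p.1 ∈ S).filter fun p => ¬ p.2 ∈ S).card = 0 := by
    have := d1
    rw [comm] at this
    rw [e0] at d2
    simp at d2
    omega
  intro p hp h1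
  by_contra h2
  have : p ∈ (T.filter fun p => p.1 ∈ S).filter fun p => ¬ p.2 ∈ S :=
    Finset.mem_filter.2 ⟨Finset.mem_filter.2 ⟨(hmemT p).2 hp, h1⟩, h2⟩
  rw [Finset.card_eq_zero] at hc0
  rw [hc0] at this
  exact absurd this (Finset.notMem_empty p)


lemma glue_orientation (hO1 : IsOrientation (G.induce Sᶜ) D1)
    (hO2 : IsOrientation (G.induce S) D2) : IsOrientation G (glue G S D1 D2) := by
  constructor
  · rintro u v (⟨hu, hv, hd⟩ | ⟨hu, hv, hd⟩ | ⟨hu, hv, hd⟩)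
    · exact hO2.1 _ _ hd
    · exact hO1.1 _ _ hd
    · exact hd
  · intro u v hadj
    by_cases hu : u ∈ S <;> by_cases hv : v ∈ S
    · have h2 := hO2.2 ⟨u, hu⟩ ⟨v, hv⟩ hadj
      constructor
      · intro h h'
        obtain ⟨_, hd⟩ := glue_mem_S_right h hv
        obtain ⟨_, hd'⟩ := glue_mem_S_right h' hu
        exact (h2.1 hd) hd'
      · intro h
        exact Or.inl ⟨hu, hv, h2.2 fun hd => h (Or.inl ⟨hv, hu, hd⟩)⟩
    · constructor
      · intro _ h'
        obtain ⟨hv', _⟩ := glue_mem_S_right h' hu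
        exact hv hv'
      · intro _; exact Or.inr (Or.inr ⟨hu, hv, hadj⟩)
    · constructor
      · intro h
        obtain ⟨hu', _⟩ := glue_mem_S_right h hv
        exact (hu hu').elim
      · intro h; exact (h (Or.inr (Or.inr ⟨hv, hu, hadj.symm⟩))).elim
    · have h1 := hO1.2 ⟨u, hu⟩ ⟨v, hv⟩ hadj
      constructor
      · intro h h'
        obtain ⟨_, hd⟩ := glue_mem_compl_left h hu
        obtain ⟨_, hd'⟩ := glue_mem_compl_left h' hv
        exact (h1.1 hd) hd'
      · intro h
        exact Or.inr (Or.inl ⟨hu, hv, h1.2 fun hd => h (Or.inr (Or.inl ⟨hv, hu, hd⟩))⟩)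


end Aux2
section Aux4
variable {V : Type*} {S : Set V} {G : SimpleGraph V} {D1 : ↥Sᶜ → ↥Sᶜ → Prop} {D2 : ↥S → ↥S → Prop}

lemma euler_glue_decomp [Finite V] {A : Set (V × V)}
    (hA : IsEulerianSub (glue G S D1 D2) A) :
    ∃ (B1 : Set (↥Sᶜ × ↥Sᶜ)) (B2 : Set (↥S × ↥S)),
      IsEulerianSub D1 B1 ∧ IsEulerianSub D2 B2 ∧ A = plift' Sᶜ B1 ∪ plift' S B2 := by
  have hcross := euler_no_cross hA
  refine ⟨{q | (↑q.1, ↑q.2) ∈ A}, {q | (↑q.1, ↑q.2) ∈ A}, ⟨?_, ?_⟩, ⟨?_, ?_⟩, ?_⟩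
  · -- B1 edges
    rintro ⟨x, y⟩ hq
    have h := hA.1 _ hq
    obtain ⟨_, hd⟩ := glue_mem_compl_left h x.2
    exact hd
  · -- B1 fibers
    rintro ⟨w, hw⟩
    have ein : Prod.map Subtype.val Subtype.val ''
        {q : ↥Sᶜ × ↥Sᶜ | q ∈ {q | (↑q.1, ↑q.2) ∈ A} ∧ q.2 = ⟨w, hw⟩} = {p | p ∈ A ∧ p.2 = w} := by
      ext p
      constructor
      · rintro ⟨⟨x, y⟩, ⟨hq, h2⟩, rfl⟩
        exact ⟨hq, congrArg Subtype.val h2⟩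
      · rintro ⟨hp, h2⟩
        have h1 : p.1 ∉ S := fun h1 => hw (h2 ▸ hcross p hp h1)
        have h2' : p.2 ∉ S := h2 ▸ hw
        exact ⟨(⟨p.1, h1⟩, ⟨p.2, h2'⟩), ⟨hp, Subtype.ext h2⟩, rfl⟩
    have eout : Prod.map Subtype.val Subtype.val ''
        {q : ↥Sᶜ × ↥Sᶜ | q ∈ {q | (↑q.1, ↑q.2) ∈ A} ∧ q.1 = ⟨w, hw⟩} = {p | p ∈ A ∧ p.1 = w} := by
      ext p
      constructor
      · rintro ⟨⟨x, y⟩, ⟨hq, h2⟩, rfl⟩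
        exact ⟨hq, congrArg Subtype.val h2⟩
      · rintro ⟨hp, h2⟩
        have h1 : p.1 ∉ S := h2 ▸ hw
        obtain ⟨h2', _⟩ := glue_mem_compl_left (hA.1 p hp) h1
        exact ⟨(⟨p.1, h1⟩, ⟨p.2, h2'⟩), ⟨hp, Subtype.ext h2⟩, rfl⟩
    have := hA.2 w
    rw [← ein, ← eout, Set.ncard_image_of_injective _ pmap_inj,
      Set.ncard_image_of_injective _ pmap_inj] at this
    exact this
  · -- B2 edges
    rintro ⟨x, y⟩ hq
    have h := hA.1 _ hq
    obtain ⟨_, hd⟩ := glue_mem_S_right h y.2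
    exact hd
  · -- B2 fibers
    rintro ⟨w, hw⟩
    have ein : Prod.map Subtype.val Subtype.val ''
        {q : ↥S × ↥S | q ∈ {q | (↑q.1, ↑q.2) ∈ A} ∧ q.2 = ⟨w, hw⟩} = {p | p ∈ A ∧ p.2 = w} := by
      ext p
      constructor
      · rintro ⟨⟨x, y⟩, ⟨hq, h2⟩, rfl⟩
        exact ⟨hq, congrArg Subtype.val h2⟩
      · rintro ⟨hp, h2⟩
        have h2' : p.2 ∈ S := h2 ▸ hw
        obtain ⟨h1, _⟩ := glue_mem_S_right (hA.1 p hp) h2'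
        exact ⟨(⟨p.1, h1⟩, ⟨p.2, h2'⟩), ⟨hp, Subtype.ext h2⟩, rfl⟩
    have eout : Prod.map Subtype.val Subtype.val ''
        {q : ↥S × ↥S | q ∈ {q | (↑q.1, ↑q.2) ∈ A} ∧ q.1 = ⟨w, hw⟩} = {p | p ∈ A ∧ p.1 = w} := by
      ext p
      constructor
      · rintro ⟨⟨x, y⟩, ⟨hq, h2⟩, rfl⟩
        exact ⟨hq, congrArg Subtype.val h2⟩
      · rintro ⟨hp, h2⟩
        have h1 : p.1 ∈ S := h2 ▸ hw
        have h2' : p.2 ∈ S := hcross p hp h1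
        exact ⟨(⟨p.1, h1⟩, ⟨p.2, h2'⟩), ⟨hp, Subtype.ext h2⟩, rfl⟩
    have := hA.2 w
    rw [← ein, ← eout, Set.ncard_image_of_injective _ pmap_inj,
      Set.ncard_image_of_injective _ pmap_inj] at this
    exact this
  · -- A = union
    ext p
    constructor
    · intro hp
      by_cases h1 : p.1 ∈ S
      · have h2 : p.2 ∈ S := hcross p hp h1
        exact Or.inr (mem_plift'.2 ⟨h1, h2, hp⟩)
      · obtain ⟨h2, _⟩ := glue_mem_compl_left (hA.1 p hp) h1
        exact Or.inl (mem_plift'.2 ⟨h1, h2, hp⟩)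
    · rintro (hp | hp)
      · obtain ⟨_, _, hq⟩ := mem_plift'.1 hp
        exact hq
      · obtain ⟨_, _, hq⟩ := mem_plift'.1 hp
        exact hq

def phi (S : Set V) (pr : Set (↥Sᶜ × ↥Sᶜ) × Set (↥S × ↥S)) : Set (V × V) :=
  plift' Sᶜ pr.1 ∪ plift' S pr.2

lemma phi_inj : Function.Injective (phi (V := V) S) := by
  intro pr pr' h
  have key : ∀ (T : Set V) (B B' : Set (↥T × ↥T)) (X X' : Set (V × V)),
      plift' T B ∪ X = plift' T B' ∪ X' →
      (∀ p ∈ X, p.1 ∉ T) → (∀ p ∈ X', p.1 ∉ T) → B = B' := by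
    intro T B B' X X' he hX hX'
    ext q
    constructor
    · intro hq
      have : (↑q.1, ↑q.2) ∈ plift' T B' ∪ X' := he ▸ Or.inl ((plift'_mem_iff q).2 hq)
      rcases this with h | h
      · exact (plift'_mem_iff q).1 h
      · exact absurd q.1.2 (hX' _ h)
    · intro hq
      have : (↑q.1, ↑q.2) ∈ plift' T B ∪ X := he ▸ Or.inl ((plift'_mem_iff q).2 hq)
      rcases this with h | h
      · exact (plift'_mem_iff q).1 h
      · exact absurd q.1.2 (hX _ h)
  have h1 : pr.1 = pr'.1 := by
    refine key Sᶜ pr.1 pr'.1 (plift' S pr.2) (plift' S pr'.2) h ?_ ?_ <;>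
    · intro p hp
      obtain ⟨ha, _, _⟩ := mem_plift'.1 hp
      exact fun hc => hc ha
  have h2 : pr.2 = pr'.2 := by
    refine key S pr.2 pr'.2 (plift' Sᶜ pr.1) (plift' Sᶜ pr'.1) ?_ ?_ ?_
    · rw [Set.union_comm, ← phi, h, phi, Set.union_comm]
    all_goals
      intro p hp
      obtain ⟨ha, _, _⟩ := mem_plift'.1 hp
      exact ha
  exact Prod.ext h1 h2

lemma count_eq [Finite V] (P : ℕ → Prop) :
    {A : Set (V × V) | IsEulerianSub (glue G S D1 D2) A ∧ P A.ncard}.ncard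
      = {pr : Set (↥Sᶜ × ↥Sᶜ) × Set (↥S × ↥S) |
          IsEulerianSub D1 pr.1 ∧ IsEulerianSub D2 pr.2 ∧ P (pr.1.ncard + pr.2.ncard)}.ncard := by
  have himg := Set.ncard_image_of_injective {pr : Set (↥Sᶜ × ↥Sᶜ) × Set (↥S × ↥S) |
      IsEulerianSub D1 pr.1 ∧ IsEulerianSub D2 pr.2 ∧ P (pr.1.ncard + pr.2.ncard)}
      (phi_inj (S := S))
  rw [← himg]
  congr 1
  ext A
  simp only [Set.mem_image, Set.mem_setOf_eq]
  constructor
  · rintro ⟨hE, hP⟩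
    obtain ⟨B1, B2, h1, h2, rfl⟩ := euler_glue_decomp hE
    exact ⟨(B1, B2), ⟨h1, h2, by rwa [← ncard_union_plift']⟩, rfl⟩
  · rintro ⟨⟨B1, B2⟩, ⟨hh1, hh2, hP⟩, rfl⟩
    refine ⟨euler_glue_union hh1 hh2, ?_⟩
    show P ((plift' Sᶜ B1 ∪ plift' S B2).ncard)
    rwa [ncard_union_plift']

end Aux4

section Aux5
variable {V : Type*} {S : Set V} {G : SimpleGraph V} {D1 : ↥Sᶜ → ↥Sᶜ → Prop} {D2 : ↥S → ↥S → Prop}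

lemma ncard_sprod {α β : Type*} [Finite α] [Finite β] (s : Set α) (t : Set β) :
    (s ×ˢ t).ncard = s.ncard * t.ncard := by
  rw [← Nat.card_coe_set_eq, ← Nat.card_coe_set_eq, ← Nat.card_coe_set_eq,
    ← Nat.card_prod]
  exact Nat.card_congr (Equiv.Set.prod s t)

lemma EE_EO_glue [Finite V] :
    (EE (glue G S D1 D2) : ℤ) - EO (glue G S D1 D2)
      = ((EE D1 : ℤ) - EO D1) * ((EE D2 : ℤ) - EO D2) := by
  set E1e := {B : Set (↥Sᶜ × ↥Sᶜ) | IsEulerianSub D1 B ∧ Even B.ncard} with hE1e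
  set E1o := {B : Set (↥Sᶜ × ↥Sᶜ) | IsEulerianSub D1 B ∧ ¬ Even B.ncard} with hE1o
  set E2e := {B : Set (↥S × ↥S) | IsEulerianSub D2 B ∧ Even B.ncard} with hE2e
  set E2o := {B : Set (↥S × ↥S) | IsEulerianSub D2 B ∧ ¬ Even B.ncard} with hE2o
  have hdisj : ∀ (X Y : Set (Set (↥Sᶜ × ↥Sᶜ))) (Z W : Set (Set (↥S × ↥S))),
      (∀ B ∈ X, Even B.ncard) → (∀ B ∈ Y, ¬ Even B.ncard) →
      Disjoint (X ×ˢ Z) (Y ×ˢ W) := by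
    intro X Y Z W hX hY
    rw [Set.disjoint_left]
    rintro ⟨B1, B2⟩ ⟨hB1, _⟩ ⟨hB1', _⟩
    exact hY _ hB1' (hX _ hB1)
  have hee : EE (glue G S D1 D2) = E1e.ncard * E2e.ncard + E1o.ncard * E2o.ncard := by
    rw [EE, count_eq (P := fun n => Even n)]
    have : {pr : Set (↥Sᶜ × ↥Sᶜ) × Set (↥S × ↥S) |
        IsEulerianSub D1 pr.1 ∧ IsEulerianSub D2 pr.2 ∧ Even (pr.1.ncard + pr.2.ncard)}
        = (E1e ×ˢ E2e) ∪ (E1o ×ˢ E2o) := by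
      ext ⟨B1, B2⟩
      simp only [hE1e, hE1o, hE2e, hE2o, Set.mem_setOf_eq, Set.mem_union, Set.mem_prod,
        Nat.even_add]
      tauto
    rw [this, Set.ncard_union_eq (hdisj _ _ _ _ (fun B hB => hB.2) (fun B hB => hB.2))
      (Set.toFinite _) (Set.toFinite _), ncard_sprod, ncard_sprod]
  have heo : EO (glue G S D1 D2) = E1e.ncard * E2o.ncard + E1o.ncard * E2e.ncard := by
    rw [EO, count_eq (P := fun n => ¬ Even n)]
    have : {pr : Set (↥Sᶜ × ↥Sᶜ) × Set (↥S × ↥S) |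
        IsEulerianSub D1 pr.1 ∧ IsEulerianSub D2 pr.2 ∧ ¬ Even (pr.1.ncard + pr.2.ncard)}
        = (E1e ×ˢ E2o) ∪ (E1o ×ˢ E2e) := by
      ext ⟨B1, B2⟩
      simp only [hE1e, hE1o, hE2e, hE2o, Set.mem_setOf_eq, Set.mem_union, Set.mem_prod,
        Nat.even_add]
      tauto
    rw [this, Set.ncard_union_eq (hdisj _ _ _ _ (fun B hB => hB.2) (fun B hB => hB.2))
      (Set.toFinite _) (Set.toFinite _), ncard_sprod, ncard_sprod]
  have he1 : EE D1 = E1e.ncard := rfl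
  have ho1 : EO D1 = E1o.ncard := rfl
  have he2 : EE D2 = E2e.ncard := rfl
  have ho2 : EO D2 = E2o.ncard := rfl
  rw [hee, heo, he1, ho1, he2, ho2]
  push_cast
  ring

lemma outDeg_glue_of_notMem {v : V} (hv : v ∉ S) :
    outDeg (glue G S D1 D2) v = outDeg D1 ⟨v, hv⟩ := by
  have h : {u | glue G S D1 D2 v u} = Subtype.val '' {w | D1 ⟨v, hv⟩ w} := by
    ext u
    constructor
    · intro h
      obtain ⟨hu, hd⟩ := glue_mem_compl_left h hv
      exact ⟨⟨u, hu⟩, hd, rfl⟩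
    · rintro ⟨⟨u, hu⟩, hd, rfl⟩
      exact Or.inr (Or.inl ⟨hv, hu, hd⟩)
  rw [outDeg, h, Set.ncard_image_of_injective _ Subtype.val_injective]
  rfl

lemma outDeg_glue_of_mem [Finite V] {v : V} (hv : v ∈ S) :
    outDeg (glue G S D1 D2) v = outDeg D2 ⟨v, hv⟩ + (G.neighborSet v ∩ Sᶜ).ncard := by
  have h : {u | glue G S D1 D2 v u}
      = (Subtype.val '' {w | D2 ⟨v, hv⟩ w}) ∪ (G.neighborSet v ∩ Sᶜ) := by
    ext u
    constructor
    · rintro (⟨hv', hu, hd⟩ | ⟨hv', hu, hd⟩ | ⟨hv', hu, hadj⟩)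
      · exact Or.inl ⟨⟨u, hu⟩, hd, rfl⟩
      · exact absurd hv hv'
      · exact Or.inr ⟨hadj, hu⟩
    · rintro (⟨⟨u, hu⟩, hd, rfl⟩ | ⟨hadj, hu⟩)
      · exact Or.inl ⟨hv, hu, hd⟩
      · exact Or.inr (Or.inr ⟨hv, hu, hadj⟩)
  have hdisj : Disjoint (Subtype.val '' {w | D2 ⟨v, hv⟩ w}) (G.neighborSet v ∩ Sᶜ) := by
    rw [Set.disjoint_left]
    rintro u hu1 hu2
    obtain ⟨w, _, rfl⟩ := hu1
    exact hu2.2 w.2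
  rw [outDeg, h, Set.ncard_union_eq hdisj, Set.ncard_image_of_injective _ Subtype.val_injective]
  rfl

lemma deg_induce {v : V} (hv : v ∈ S) :
    deg (G.induce S) ⟨v, hv⟩ = (G.neighborSet v ∩ S).ncard := by
  have h : G.neighborSet v ∩ S = Subtype.val '' ((G.induce S).neighborSet ⟨v, hv⟩) := by
    ext u
    constructor
    · rintro ⟨hadj, hu⟩
      exact ⟨⟨u, hu⟩, hadj, rfl⟩
    · rintro ⟨⟨u, hu⟩, hadj, rfl⟩
      exact ⟨hadj, hu⟩
  rw [deg, h, Set.ncard_image_of_injective _ Subtype.val_injective]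

lemma deg_split [Finite V] (v : V) :
    deg G v = (G.neighborSet v ∩ S).ncard + (G.neighborSet v ∩ Sᶜ).ncard := by
  have hdisj : Disjoint (G.neighborSet v ∩ S) (G.neighborSet v ∩ Sᶜ) := by
    rw [Set.disjoint_left]
    rintro u hu1 hu2
    exact hu2.2 hu1.2
  rw [deg, ← Set.ncard_union_eq hdisj, Set.inter_union_compl]
end Aux5


theorem statement_7 {V : Type*} [Fintype V] (G : SimpleGraph V) (f : V → ℕ) (S : Set V)
    (h1 : IsfAT (G.induce Sᶜ) (fun v => f ↑v))
    (h2 : IsfAT (G.induce S) (fun v => f ↑v + deg (G.induce S) v - deg G ↑v)) :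
    IsfAT G f := by
  obtain ⟨D1, hO1, hd1, hne1⟩ := h1
  obtain ⟨D2, hO2, hd2, hne2⟩ := h2
  refine ⟨glue G S D1 D2, glue_orientation hO1 hO2, ?_, ?_⟩
  · intro v
    by_cases hv : v ∈ S
    · rw [outDeg_glue_of_mem hv]
      have hb := hd2 ⟨v, hv⟩
      have hdi := deg_induce (G := G) hv
      have hds := deg_split (G := G) (S := S) v
      simp only [] at hb
      rw [hdi] at hb
      omega
    · rw [outDeg_glue_of_notMem hv]
      exact hd1 ⟨v, hv⟩
  · intro h
    have hident := EE_EO_glue (G := G) (S := S) (D1 := D1) (D2 := D2)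
    rw [h, sub_self] at hident
    rcases mul_eq_zero.1 hident.symm with h' | h'
    · exact hne1 (by exact_mod_cast sub_eq_zero.1 h')
    · exact hne2 (by exact_mod_cast sub_eq_zero.1 h')

end Paper
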